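/- arXiv:1412.8377 — 5 statements merged into one kernel-verified Lean document; each statement's English description precedes it below -/
import Mathlib

section
/- Let F be a field of characteristic p ≥ 5 and let K₁ and K₂ be the 5-dimensional abelian restricted Lie algebras over F with the same underlying abelian Lie algebra span{x₁,...,x₅} and p-maps determined respectively by (K₁): x₁^{[p]} = x₂, x₂^{[p]} = x₅, all other basis p-powers zero, and (K₂): x₁^{[p]} = x₂, x₃^{[p]} = x₅, all other basis p-powers zero. Then K₁ and K₂ are not isomorphic as restricted Lie algebras. -/
open Finset in
/-- A restricted Lie algebra structure on a Lie algebra `L` over a field of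
characteristic `p`: a `p`-operation `x ↦ x^{[p]}` which is `p`-semilinear for scalars,
satisfies `ad (x^{[p]}) = (ad x)^p`, and the Jacobson sum formula. -/
structure RestrictedStructure (p : ℕ) (F : Type*) (L : Type*) [Field F]
    [LieRing L] [LieAlgebra F L] where
  pmap : L → L
  pmap_smul : ∀ (c : F) (x : L), pmap (c • x) = c ^ p • pmap x
  pmap_ad : ∀ x y : L, ⁅y, pmap x⁆ = (fun z => ⁅z, x⁆)^[p] y
  pmap_add : ∀ x y : L, pmap (x + y) = pmap x + pmap y +
    ∑ f : Fin (p - 2) → Bool,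
      (((Finset.univ.filter fun i => f i = true).card + 1 : F))⁻¹ •
        List.foldl (fun a c => ⁅a, c⁆) x
          (y :: (List.ofFn fun i => if f i then x else y))


lemma foldl_bracket_zero {K : Type*} [LieRing K] (l : List K) :
    List.foldl (fun a c => ⁅a, c⁆) (0 : K) l = 0 := by
  induction l with
  | nil => rfl
  | cons c l ih =>
      rw [List.foldl_cons]
      show List.foldl _ ⁅(0:K), c⁆ l = 0
      rw [zero_lie]; exact ih

lemma pmap_add' {p : ℕ} [Fact p.Prime] {F : Type*} [Field F]
    {K : Type*} [LieRing K] [LieAlgebra F K] [IsLieAbelian K]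
    (P : RestrictedStructure p F K) (x y : K) :
    P.pmap (x + y) = P.pmap x + P.pmap y := by
  rw [P.pmap_add]
  have : ∀ f : Fin (p - 2) → Bool,
      List.foldl (fun a c => ⁅a, c⁆) x
        (y :: (List.ofFn fun i => if f i then x else y)) = 0 := by
    intro f
    rw [List.foldl_cons]
    show List.foldl _ ⁅x, y⁆ _ = 0
    rw [trivial_lie_zero]
    exact foldl_bracket_zero _
  simp only [this, smul_zero, Finset.sum_const_zero, add_zero]

lemma pmap_zero' {p : ℕ} [Fact p.Prime] {F : Type*} [Field F]
    {K : Type*} [LieRing K] [LieAlgebra F K] [IsLieAbelian K]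
    (P : RestrictedStructure p F K) : P.pmap 0 = 0 := by
  have := P.pmap_smul 0 0
  simpa [zero_pow (Fact.out : p.Prime).ne_zero] using this

/-- Over a field of characteristic `p ≥ 5`, the two restricted structures on the
5-dimensional abelian Lie algebra with basis `x₁,…,x₅` determined by
`K₁ : x₁^{[p]} = x₂, x₂^{[p]} = x₅` (other basis `p`-powers zero) and
`K₂ : x₁^{[p]} = x₂, x₃^{[p]} = x₅` (other basis `p`-powers zero)
are not isomorphic as restricted Lie algebras. -/
theorem stmt_12 (p : ℕ) [Fact p.Prime] (hp5 : 5 ≤ p)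
    {F : Type*} [Field F] [CharP F p]
    {K : Type*} [LieRing K] [LieAlgebra F K] [IsLieAbelian K]
    (b : Module.Basis (Fin 5) F K)
    (P₁ P₂ : RestrictedStructure p F K)
    (h₁0 : P₁.pmap (b 0) = b 1) (h₁1 : P₁.pmap (b 1) = b 4)
    (h₁2 : P₁.pmap (b 2) = 0) (h₁3 : P₁.pmap (b 3) = 0) (h₁4 : P₁.pmap (b 4) = 0)
    (h₂0 : P₂.pmap (b 0) = b 1) (h₂1 : P₂.pmap (b 1) = 0)
    (h₂2 : P₂.pmap (b 2) = b 4) (h₂3 : P₂.pmap (b 3) = 0) (h₂4 : P₂.pmap (b 4) = 0) :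
    ¬ ∃ e : K ≃ₗ⁅F⁆ K, ∀ x : K, e (P₁.pmap x) = P₂.pmap (e x) := by

  rintro ⟨e, he⟩
  have hP2 : ∀ y : K, P₂.pmap (P₂.pmap y) = 0 := by
    intro y
    have hy : y = ∑ i, b.repr y i • b i := (b.sum_repr y).symm
    set hom : K →+ K := AddMonoidHom.mk' P₂.pmap (pmap_add' P₂) with hhom
    have hhomap : ∀ z, hom z = P₂.pmap z := fun z => rfl
    have h1 : P₂.pmap y = (b.repr y 0) ^ p • b 1 + (b.repr y 2) ^ p • b 4 := by
      conv_lhs => rw [hy, ← hhomap, map_sum]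
      simp only [hhomap, P₂.pmap_smul]
      rw [Fin.sum_univ_five]
      simp [h₂0, h₂1, h₂2, h₂3, h₂4]
    rw [h1, ← hhomap, map_add, hhomap, hhomap, P₂.pmap_smul, P₂.pmap_smul,
      h₂1, h₂4, smul_zero, smul_zero, add_zero]
  have h01 : e (b 1) = P₂.pmap (e (b 0)) := by
    have := he (b 0); rwa [h₁0] at this
  have key : e (b 4) = 0 := by
    have := he (b 1)
    rw [h₁1, h01, hP2] at this
    exact this
  have hb4 : (b 4 : K) = 0 := e.injective (show e (b 4) = e 0 by simp [key])
  exact b.ne_zero 4 hb4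
end

section
/- Let F be a field of characteristic p ≥ 5 and let L = L_{5,2} be the 5-dimensional Lie algebra with basis x₁,...,x₅ and only nonzero bracket [x₁, x₂] = x₃. Consider the two restricted Lie algebra structures on L determined by (A): x₁^{[p]} = x₃ and all other basis p-powers zero, and (B): x₄^{[p]} = x₃ and all other basis p-powers zero. Then (A) and (B) are not isomorphic as restricted Lie algebras. -/
/-- Let `F` have characteristic `p ≥ 5` and let `L = L_{5,2}` be the 5-dimensional
Lie algebra with basis `x₁,…,x₅` and only nonzero bracket `[x₁,x₂] = x₃`.  The
restricted structures determined by (A) `x₁^{[p]} = x₃` (other basis `p`-powers zero)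
and (B) `x₄^{[p]} = x₃` (other basis `p`-powers zero) are not isomorphic as
restricted Lie algebras. -/
theorem stmt_13 (p : ℕ) [Fact p.Prime] (hp5 : 5 ≤ p)
    {F : Type*} [Field F] [CharP F p]
    {L : Type*} [LieRing L] [LieAlgebra F L]
    (b : Module.Basis (Fin 5) F L)
    (hbr : ⁅b 0, b 1⁆ = b 2)
    (hz : ∀ i j : Fin 5, ¬(i = 0 ∧ j = 1) → ¬(i = 1 ∧ j = 0) → ⁅b i, b j⁆ = 0)
    (PA PB : RestrictedStructure p F L)
    (hA0 : PA.pmap (b 0) = b 2) (hA1 : PA.pmap (b 1) = 0) (hA2 : PA.pmap (b 2) = 0)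
    (hA3 : PA.pmap (b 3) = 0) (hA4 : PA.pmap (b 4) = 0)
    (hB0 : PB.pmap (b 0) = 0) (hB1 : PB.pmap (b 1) = 0) (hB2 : PB.pmap (b 2) = 0)
    (hB3 : PB.pmap (b 3) = b 2) (hB4 : PB.pmap (b 4) = 0) :
    ¬ ∃ e : L ≃ₗ⁅F⁆ L, ∀ x : L, e (PA.pmap x) = PB.pmap (e x) := by
  intro ⟨e, he⟩
  classical
  -- basic bracket facts
  have h10 : ⁅b 1, b 0⁆ = -b 2 := by rw [← lie_skew, hbr]
  have hzz : ∀ i j : Fin 5, (i ≠ 0 ∨ j ≠ 1) → (i ≠ 1 ∨ j ≠ 0) → ⁅b i, b j⁆ = 0 := by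
    intro i j h1 h2
    exact hz i j (by tauto) (by tauto)
  -- ⁅b 2, z⁆ = 0 and ⁅b 3, z⁆ = 0 for all z
  have adzero : ∀ i : Fin 5, i ≠ 0 → i ≠ 1 → ∀ z : L, ⁅b i, z⁆ = 0 := by
    intro i hi0 hi1 z
    have h : LieAlgebra.ad F L (b i) = 0 := by
      apply b.ext
      intro j
      simpa [LieAlgebra.ad_apply] using hzz i j (Or.inl hi0) (Or.inl hi1)
    have := congrArg (fun f => f z) h
    simpa [LieAlgebra.ad_apply] using this
  -- the general bracket formula
  have lie_formula : ∀ x y : L,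
      ⁅x, y⁆ = (b.repr x 0 * b.repr y 1 - b.repr x 1 * b.repr y 0) • b 2 := by
    intro x y
    have hx := b.sum_repr x
    have hy := b.sum_repr y
    rw [Fin.sum_univ_five] at hx hy
    calc ⁅x, y⁆ = ⁅b.repr x 0 • b 0 + b.repr x 1 • b 1 + b.repr x 2 • b 2 +
            b.repr x 3 • b 3 + b.repr x 4 • b 4,
          b.repr y 0 • b 0 + b.repr y 1 • b 1 + b.repr y 2 • b 2 +
            b.repr y 3 • b 3 + b.repr y 4 • b 4⁆ := by rw [hx, hy]
      _ = (b.repr x 0 * b.repr y 1 - b.repr x 1 * b.repr y 0) • b 2 := by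
          simp only [add_lie, lie_add, smul_lie, lie_smul, hbr, h10,
            hzz 0 0 (by simp) (by simp), hzz 0 2 (by simp) (by simp),
            hzz 0 3 (by simp) (by simp), hzz 0 4 (by simp) (by simp),
            hzz 1 1 (by simp) (by simp), hzz 1 2 (by simp) (by simp),
            hzz 1 3 (by simp) (by simp), hzz 1 4 (by simp) (by simp),
            hzz 2 0 (by simp) (by simp), hzz 2 1 (by simp) (by simp),
            hzz 2 2 (by simp) (by simp), hzz 2 3 (by simp) (by simp),
            hzz 2 4 (by simp) (by simp),
            hzz 3 0 (by simp) (by simp), hzz 3 1 (by simp) (by simp),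
            hzz 3 2 (by simp) (by simp), hzz 3 3 (by simp) (by simp),
            hzz 3 4 (by simp) (by simp),
            hzz 4 0 (by simp) (by simp), hzz 4 1 (by simp) (by simp),
            hzz 4 2 (by simp) (by simp), hzz 4 3 (by simp) (by simp),
            hzz 4 4 (by simp) (by simp), smul_zero, add_zero, zero_add,
            smul_neg]
          module
  -- double brackets vanish
  have lie2 : ∀ x y z : L, ⁅⁅x, y⁆, z⁆ = 0 := by
    intro x y z
    rw [lie_formula x y, smul_lie, adzero 2 (by simp) (by simp) z, smul_zero]
  have foldl0 : ∀ l : List L, List.foldl (fun a c => ⁅a, c⁆) 0 l = 0 := by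
    intro l
    induction l with
    | nil => rfl
    | cons a t ih => simpa using ih
  -- additivity of any restricted structure's p-map
  have padd : ∀ (P : RestrictedStructure p F L) (x y : L),
      P.pmap (x + y) = P.pmap x + P.pmap y := by
    intro P x y
    rw [P.pmap_add]
    have : ∀ f : Fin (p - 2) → Bool,
        (((Finset.univ.filter fun i => f i = true).card + 1 : F))⁻¹ •
          List.foldl (fun a c => ⁅a, c⁆) x
            (y :: (List.ofFn fun i => if f i then x else y)) = 0 := by
      intro f
      obtain ⟨cc, l', hl⟩ : ∃ cc l',
          (List.ofFn fun i => if f i then x else y) = cc :: l' := by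
        cases hcase : (List.ofFn fun i : Fin (p-2) => if f i then x else y) with
        | nil =>
            exfalso
            have hlen := List.length_ofFn (f := fun i : Fin (p-2) => if f i then x else y)
            rw [hcase] at hlen
            simp at hlen
            omega
        | cons a t => exact ⟨a, t, rfl⟩
      rw [hl]
      simp only [List.foldl_cons, lie2, foldl0, smul_zero]
    rw [Finset.sum_eq_zero fun f _ => this f, add_zero]
  -- semilinear expansion of the p-map
  have pexp : ∀ (P : RestrictedStructure p F L) (z : L),
      P.pmap z = (b.repr z 0) ^ p • P.pmap (b 0) + (b.repr z 1) ^ p • P.pmap (b 1)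
        + (b.repr z 2) ^ p • P.pmap (b 2) + (b.repr z 3) ^ p • P.pmap (b 3)
        + (b.repr z 4) ^ p • P.pmap (b 4) := by
    intro P z
    have hx := b.sum_repr z
    rw [Fin.sum_univ_five] at hx
    conv_lhs => rw [← hx]
    rw [padd, padd, padd, padd, P.pmap_smul, P.pmap_smul, P.pmap_smul,
      P.pmap_smul, P.pmap_smul]
  -- the key element
  set u := e.symm (b 3) with hu
  have hb3central : ∀ z : L, ⁅b 3, z⁆ = 0 := adzero 3 (by simp) (by simp)
  have hzmap : e.symm (0 : L) = 0 := e.symm.toLinearEquiv.map_zero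
  have hu1 : ⁅u, b 1⁆ = 0 := by
    have h1 : ⁅u, b 1⁆ = e.symm ⁅b 3, e (b 1)⁆ := by
      conv_lhs => rw [← e.symm_apply_apply (b 1)]
      rw [← LieEquiv.map_lie]
    rw [h1, hb3central (e (b 1)), hzmap]
  -- hence the b0-coordinate of u vanishes
  have hu0 : b.repr u 0 = 0 := by
    have h2 := lie_formula u (b 1)
    rw [hu1] at h2
    have hr1 : b.repr (b 1) 1 = 1 := by simp
    have hr0 : b.repr (b 1) 0 = 0 := by simp
    rw [hr1, hr0, mul_one, mul_zero, sub_zero] at h2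
    rcases smul_eq_zero.mp h2.symm with h | h
    · exact h
    · exact absurd h (b.ne_zero 2)
  -- PA.pmap u = 0
  have hpu : PA.pmap u = 0 := by
    rw [pexp PA u, hA0, hA1, hA2, hA3, hA4, hu0]
    have hp0 : p ≠ 0 := (Fact.out : p.Prime).ne_zero
    simp [zero_pow hp0]
  -- contradiction
  have hfinal := he u
  rw [hpu, e.apply_symm_apply] at hfinal
  rw [hB3] at hfinal
  have hzmap2 : e (0 : L) = 0 := e.toLinearEquiv.map_zero
  rw [hzmap2] at hfinal
  exact b.ne_zero 2 hfinal.symm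
end

section
/- Let F be a field of characteristic p ≥ 5 and let L = L_{5,3} = ⟨x₁,...,x₅ | [x₁,x₂] = x₃, [x₁,x₃] = x₄⟩. Every Lie algebra automorphism A of L satisfies A(x₃) = a₁₁a₂₂ x₃ + a₁₁a₃₂ x₄ and A(x₄) = a₁₁²a₂₂ x₄, where a_{ij} are the matrix entries of A in the basis x₁,...,x₅, and a₁₁a₂₂ ≠ 0. -/
/-- Let `L = L_{5,3}` be the 5-dimensional nilpotent Lie algebra over a field of
characteristic `p ≥ 5` with basis `x₁,…,x₅` and nonzero brackets `[x₁,x₂] = x₃`,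
`[x₁,x₃] = x₄`.  Every Lie algebra automorphism `A` of `L`, with matrix entries
`a i j` (the coefficient of `xᵢ` in `A xⱼ`), satisfies
`A x₃ = a₁₁a₂₂ x₃ + a₁₁a₃₂ x₄`, `A x₄ = a₁₁²a₂₂ x₄` and `a₁₁a₂₂ ≠ 0`. -/
theorem stmt_14 (p : ℕ) [Fact p.Prime] (hp5 : 5 ≤ p)
    {F : Type*} [Field F] [CharP F p]
    {L : Type*} [LieRing L] [LieAlgebra F L]
    (b : Module.Basis (Fin 5) F L)
    (h12 : ⁅b 0, b 1⁆ = b 2) (h13 : ⁅b 0, b 2⁆ = b 3)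
    (hz : ∀ i j : Fin 5,
      ¬(i = 0 ∧ j = 1) → ¬(i = 1 ∧ j = 0) →
      ¬(i = 0 ∧ j = 2) → ¬(i = 2 ∧ j = 0) → ⁅b i, b j⁆ = 0)
    (A : L ≃ₗ⁅F⁆ L) :
    ∀ a : Fin 5 → Fin 5 → F, (a = fun i j => b.repr (A (b j)) i) →
      A (b 2) = (a 0 0 * a 1 1) • b 2 + (a 0 0 * a 2 1) • b 3 ∧
      A (b 3) = (a 0 0 ^ 2 * a 1 1) • b 3 ∧
      a 0 0 * a 1 1 ≠ 0 := by
  intro a ha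
  subst ha
  have h10 : ⁅b 1, b 0⁆ = -b 2 := by rw [← lie_skew, h12]
  have h20 : ⁅b 2, b 0⁆ = -b 3 := by rw [← lie_skew, h13]
  have key : ∀ u v : Fin 5 → F,
      ⁅∑ i, u i • b i, ∑ i, v i • b i⁆
        = (u 0 * v 1 - u 1 * v 0) • b 2 + (u 0 * v 2 - u 2 * v 0) • b 3 := by
    intro u v
    simp only [Fin.sum_univ_five, add_lie, lie_add, smul_lie, lie_smul,
      h12, h13, h10, h20]
    rw [hz 0 0 (by decide) (by decide) (by decide) (by decide),
        hz 0 3 (by decide) (by decide) (by decide) (by decide),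
        hz 0 4 (by decide) (by decide) (by decide) (by decide),
        hz 1 1 (by decide) (by decide) (by decide) (by decide),
        hz 1 2 (by decide) (by decide) (by decide) (by decide),
        hz 1 3 (by decide) (by decide) (by decide) (by decide),
        hz 1 4 (by decide) (by decide) (by decide) (by decide),
        hz 2 1 (by decide) (by decide) (by decide) (by decide),
        hz 2 2 (by decide) (by decide) (by decide) (by decide),
        hz 2 3 (by decide) (by decide) (by decide) (by decide),
        hz 2 4 (by decide) (by decide) (by decide) (by decide),
        hz 3 0 (by decide) (by decide) (by decide) (by decide),
        hz 3 1 (by decide) (by decide) (by decide) (by decide),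
        hz 3 2 (by decide) (by decide) (by decide) (by decide),
        hz 3 3 (by decide) (by decide) (by decide) (by decide),
        hz 3 4 (by decide) (by decide) (by decide) (by decide),
        hz 4 0 (by decide) (by decide) (by decide) (by decide),
        hz 4 1 (by decide) (by decide) (by decide) (by decide),
        hz 4 2 (by decide) (by decide) (by decide) (by decide),
        hz 4 3 (by decide) (by decide) (by decide) (by decide),
        hz 4 4 (by decide) (by decide) (by decide) (by decide)]
    module
  set r : Fin 5 → Fin 5 → F := fun i j => b.repr (A (b j)) i with hr
  have hrep : ∀ j : Fin 5, A (b j) = ∑ i, r i j • b i := by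
    intro j
    exact (b.sum_repr (A (b j))).symm
  set α : F := r 0 0 * r 1 1 - r 1 0 * r 0 1 with hα
  set β : F := r 0 0 * r 2 1 - r 2 0 * r 0 1 with hβ
  have hA2 : A (b 2) = α • b 2 + β • b 3 := by
    conv_lhs => rw [← h12, LieEquiv.map_lie, hrep 0, hrep 1, key]
  have hA2' : A (b 2) = ∑ i, (![0, 0, α, β, 0] : Fin 5 → F) i • b i := by
    rw [hA2]
    simp [Fin.sum_univ_five]
  have hA3 : A (b 3) = (r 0 0 * α) • b 3 := by
    conv_lhs => rw [← h13, LieEquiv.map_lie, hrep 0, hA2', key]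
    simp
  have hzero : ⁅A (b 1), A (b 2)⁆ = 0 := by
    have hmz : A (0 : L) = 0 := by
      have := A.toLinearEquiv.map_zero
      simpa using this
    rw [← LieEquiv.map_lie, hz 1 2 (by decide) (by decide) (by decide) (by decide), hmz]
  have h01 : r 0 1 * α = 0 := by
    rw [hrep 1, hA2', key] at hzero
    simp at hzero
    rcases hzero with h | h
    · exact mul_eq_zero.mpr h
    · exact absurd h (b.ne_zero 3)
  have hA3ne : A (b 3) ≠ 0 := by
    intro h
    have hmz : A (0 : L) = 0 := by
      have := A.toLinearEquiv.map_zero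
      simpa using this
    exact b.ne_zero 3 (A.injective (h.trans hmz.symm))
  have hne : r 0 0 * α ≠ 0 := by
    intro h
    rw [hA3, h, zero_smul] at hA3ne
    exact hA3ne rfl
  have hr00 : r 0 0 ≠ 0 := fun h => hne (by rw [h, zero_mul])
  have hαne : α ≠ 0 := fun h => hne (by rw [h, mul_zero])
  have hr01 : r 0 1 = 0 := by
    rcases mul_eq_zero.mp h01 with h | h
    · exact h
    · exact absurd h hαne
  have hα' : α = r 0 0 * r 1 1 := by rw [hα, hr01, mul_zero, sub_zero]
  have hβ' : β = r 0 0 * r 2 1 := by rw [hβ, hr01, mul_zero, sub_zero]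
  refine ⟨?_, ?_, ?_⟩
  · rw [hA2, hα', hβ']
  · rw [hA3, hα']; ring_nf
  · rw [← hα']; exact hαne
end

section
/- Let F be a field of characteristic p ≥ 5, and for ξ ∈ F* let K(ξ) denote the restricted Lie algebra ⟨x₁,...,x₅ | [x₁,x₂]=x₃, [x₁,x₃]=x₄, x₂^{[p]}=ξx₄, x₄^{[p]}=x₅, other basis p-powers zero⟩. Then K(ξ₁) ≅ K(ξ₂) as restricted Lie algebras if and only if ξ₂ξ₁^{−1} is a square in F*. -/
/-- For `ξ ∈ F*` let `K(ξ)` be the restricted Lie algebra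
`⟨x₁,…,x₅ | [x₁,x₂]=x₃, [x₁,x₃]=x₄, x₂^{[p]}=ξx₄, x₄^{[p]}=x₅⟩` (other basis
brackets and `p`-powers zero) over a field of characteristic `p ≥ 5`.  Then
`K(ξ₁) ≅ K(ξ₂)` as restricted Lie algebras iff `ξ₂ξ₁⁻¹` is a square in `F*`. -/
theorem stmt_15 (p : ℕ) [Fact p.Prime] (hp5 : 5 ≤ p)
    {F : Type*} [Field F] [CharP F p]
    {L : Type*} [LieRing L] [LieAlgebra F L]
    (b : Module.Basis (Fin 5) F L)
    (h12 : ⁅b 0, b 1⁆ = b 2) (h13 : ⁅b 0, b 2⁆ = b 3)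
    (hz : ∀ i j : Fin 5,
      ¬(i = 0 ∧ j = 1) → ¬(i = 1 ∧ j = 0) →
      ¬(i = 0 ∧ j = 2) → ¬(i = 2 ∧ j = 0) → ⁅b i, b j⁆ = 0)
    (ξ₁ ξ₂ : F) (hξ₁ : ξ₁ ≠ 0) (hξ₂ : ξ₂ ≠ 0)
    (P₁ P₂ : RestrictedStructure p F L)
    (h₁0 : P₁.pmap (b 0) = 0) (h₁1 : P₁.pmap (b 1) = ξ₁ • b 3)
    (h₁2 : P₁.pmap (b 2) = 0) (h₁3 : P₁.pmap (b 3) = b 4) (h₁4 : P₁.pmap (b 4) = 0)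
    (h₂0 : P₂.pmap (b 0) = 0) (h₂1 : P₂.pmap (b 1) = ξ₂ • b 3)
    (h₂2 : P₂.pmap (b 2) = 0) (h₂3 : P₂.pmap (b 3) = b 4) (h₂4 : P₂.pmap (b 4) = 0) :
    (∃ e : L ≃ₗ⁅F⁆ L, ∀ x : L, e (P₁.pmap x) = P₂.pmap (e x)) ↔
      ∃ c : F, c ≠ 0 ∧ ξ₂ * ξ₁⁻¹ = c ^ 2 := by
  -- individual basis bracket values
  have h00 : ⁅b 0, b 0⁆ = (0:L) := hz 0 0 (by decide) (by decide) (by decide) (by decide)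
  have h03 : ⁅b 0, b 3⁆ = (0:L) := hz 0 3 (by decide) (by decide) (by decide) (by decide)
  have h04 : ⁅b 0, b 4⁆ = (0:L) := hz 0 4 (by decide) (by decide) (by decide) (by decide)
  have h10 : ⁅b 1, b 0⁆ = -(b 2) := by rw [← lie_skew, h12]
  have h20 : ⁅b 2, b 0⁆ = -(b 3) := by rw [← lie_skew, h13]
  have hzz : ∀ i j : Fin 5, i ≠ 0 → j ≠ 0 → ⁅b i, b j⁆ = 0 := fun i j hi hj =>
    hz i j (fun h => hi h.1) (fun h => hj h.2) (fun h => hi h.1) (fun h => hj h.2)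
  -- brackets of basis vectors with general vectors
  have hb0 : ∀ y : L, ⁅b 0, y⁆ = (b.repr y 1) • b 2 + (b.repr y 2) • b 3 := by
    intro y
    conv_lhs => rw [← b.sum_repr y, Fin.sum_univ_five]
    simp [lie_add, lie_smul, h00, h03, h04, h12, h13]
  have hb1 : ∀ y : L, ⁅b 1, y⁆ = -((b.repr y 0) • b 2) := by
    intro y
    conv_lhs => rw [← b.sum_repr y, Fin.sum_univ_five]
    simp [lie_add, lie_smul, h10, hzz 1 1, hzz 1 2, hzz 1 3, hzz 1 4]
  have hb2 : ∀ y : L, ⁅b 2, y⁆ = -((b.repr y 0) • b 3) := by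
    intro y
    conv_lhs => rw [← b.sum_repr y, Fin.sum_univ_five]
    simp [lie_add, lie_smul, h20, hzz 2 1, hzz 2 2, hzz 2 3, hzz 2 4]
  have hb3 : ∀ y : L, ⁅b 3, y⁆ = 0 := by
    intro y
    conv_lhs => rw [← b.sum_repr y, Fin.sum_univ_five]
    simp [lie_add, lie_smul, hzz 3 1, hzz 3 2, hzz 3 3, hzz 3 4,
      hz 3 0 (by decide) (by decide) (by decide) (by decide)]
  have hb4 : ∀ y : L, ⁅b 4, y⁆ = 0 := by
    intro y
    conv_lhs => rw [← b.sum_repr y, Fin.sum_univ_five]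
    simp [lie_add, lie_smul, hzz 4 1, hzz 4 2, hzz 4 3, hzz 4 4,
      hz 4 0 (by decide) (by decide) (by decide) (by decide)]
  -- general bracket formula
  have hbr : ∀ x y : L, ⁅x, y⁆ =
      (b.repr x 0 * b.repr y 1 - b.repr x 1 * b.repr y 0) • b 2 +
      (b.repr x 0 * b.repr y 2 - b.repr x 2 * b.repr y 0) • b 3 := by
    intro x y
    conv_lhs => rw [← b.sum_repr x, Fin.sum_univ_five]
    simp only [add_lie, smul_lie, hb0, hb1, hb2, hb3, hb4]
    module
  -- quadruple brackets vanish
  have h4 : ∀ x y z w : L, ⁅⁅⁅x, y⁆, z⁆, w⁆ = 0 := by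
    intro x y z w
    rw [hbr x y]
    simp [add_lie, smul_lie, hb2, hb3, smul_smul]
  -- foldl from zero
  have fold0 : ∀ l : List L, List.foldl (fun a c => ⁅a, c⁆) 0 l = 0 := by
    intro l; induction l with
    | nil => rfl
    | cons a l ih => simpa [zero_lie] using ih
  have fold2 : ∀ (l : List L) (x y : L), 2 ≤ l.length →
      List.foldl (fun a c => ⁅a, c⁆) ⁅x, y⁆ l = 0 := by
    intro l x y hl
    rcases l with _ | ⟨a, _ | ⟨c, l⟩⟩
    · simp at hl
    · simp at hl
    · simp only [List.foldl_cons]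
      rw [h4, fold0]
  -- Jacobson sum terms vanish
  have hJ : ∀ (x y : L) (f : Fin (p - 2) → Bool),
      List.foldl (fun a c => ⁅a, c⁆) x
        (y :: (List.ofFn fun i => if f i then x else y)) = 0 := by
    intro x y f
    rw [List.foldl_cons]
    apply fold2
    rw [List.length_ofFn]
    omega
  -- pmap is additive
  have hAdd : ∀ (P : RestrictedStructure p F L) (u v : L),
      P.pmap (u + v) = P.pmap u + P.pmap v := by
    intro P u v
    rw [P.pmap_add, Finset.sum_eq_zero, add_zero]
    intro f _
    rw [hJ u v f, smul_zero]
  -- pmap on a general element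
  have key : ∀ (P : RestrictedStructure p F L) (x : L),
      P.pmap x = (b.repr x 0) ^ p • P.pmap (b 0) + (b.repr x 1) ^ p • P.pmap (b 1) +
        (b.repr x 2) ^ p • P.pmap (b 2) + (b.repr x 3) ^ p • P.pmap (b 3) +
        (b.repr x 4) ^ p • P.pmap (b 4) := by
    intro P x
    conv_lhs => rw [← b.sum_repr x, Fin.sum_univ_five]
    rw [hAdd, hAdd, hAdd, hAdd, P.pmap_smul, P.pmap_smul, P.pmap_smul, P.pmap_smul,
      P.pmap_smul]
  constructor
  · rintro ⟨e, he⟩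
    set a0 := b.repr (e (b 0)) 0 with ha0
    set a1 := b.repr (e (b 0)) 1 with ha1
    set a2 := b.repr (e (b 0)) 2 with ha2
    set c0 := b.repr (e (b 1)) 0 with hc0'
    set c1 := b.repr (e (b 1)) 1 with hc1'
    set c2 := b.repr (e (b 1)) 2 with hc2'
    have emap0 : e (0:L) = 0 := e.map_zero
    have emaps : ∀ (t : F) (x : L), e (t • x) = t • e x := fun t x => e.map_smul t x
    have einj : ∀ {x y : L}, e x = e y → x = y := fun h => e.injective h
    have heb2 : e (b 2) = (a0*c1 - a1*c0) • b 2 + (a0*c2 - a2*c0) • b 3 := by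
      conv_lhs => rw [← h12, e.map_lie, hbr]
    have hr20 : b.repr (e (b 2)) 0 = 0 := by
      rw [heb2]; simp [Module.Basis.repr_self, Finsupp.single_apply]
    have hr21 : b.repr (e (b 2)) 1 = 0 := by
      rw [heb2]; simp [Module.Basis.repr_self, Finsupp.single_apply]
    have hr22 : b.repr (e (b 2)) 2 = a0*c1 - a1*c0 := by
      rw [heb2]; simp [Module.Basis.repr_self, Finsupp.single_apply]
    have heb3 : e (b 3) = (a0 * (a0*c1 - a1*c0)) • b 3 := by
      conv_lhs => rw [← h13, e.map_lie, hbr]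
      rw [hr20, hr21, hr22]
      module
    have hlie12 : ⁅b 1, b 2⁆ = (0:L) := hzz 1 2 (by decide) (by decide)
    have h0 : (c0 * (a0*c1 - a1*c0)) • b 3 = (0:L) := by
      have h' := e.map_lie (b 1) (b 2)
      rw [hlie12, emap0, hbr, hr20, hr21, hr22] at h'
      simpa using h'.symm
    have hc0d : c0 * (a0*c1 - a1*c0) = 0 := by
      rcases smul_eq_zero.mp h0 with h | h
      · exact h
      · exact absurd h (b.ne_zero 3)
    have hne : a0 * (a0*c1 - a1*c0) ≠ 0 := by
      intro h
      have h3 : e (b 3) = e 0 := by rw [heb3, h, zero_smul, emap0]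
      exact absurd (einj h3) (b.ne_zero 3)
    have ha0' : a0 ≠ 0 := fun h => hne (by rw [h, zero_mul])
    have hd : a0*c1 - a1*c0 ≠ 0 := fun h => hne (by rw [h, mul_zero])
    have hc0 : c0 = 0 := by
      rcases mul_eq_zero.mp hc0d with h | h
      · exact h
      · exact absurd h hd
    have hc1 : c1 ≠ 0 := by
      intro h; apply hd; rw [hc0, h]; ring
    have hmain := he (b 1)
    rw [h₁1, emaps, heb3, key P₂ (e (b 1)), h₂0, h₂1, h₂2, h₂3, h₂4] at hmain
    have hcoe := congrArg (fun v => b.repr v 3) hmain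
    simp [Module.Basis.repr_self, Finsupp.single_apply, hc0] at hcoe
    rw [← hc1'] at hcoe
    have hps : c1 ^ p = c1 ^ (p-1) * c1 := by rw [← pow_succ]; congr 1; omega
    rw [hps] at hcoe
    have hkey : ξ₂ * c1 ^ (p-1) = ξ₁ * a0 ^ 2 :=
      mul_right_cancel₀ hc1 (by linear_combination -hcoe)
    refine ⟨a0 * (c1 ^ ((p-1)/2))⁻¹, mul_ne_zero ha0' (inv_ne_zero (pow_ne_zero _ hc1)), ?_⟩
    have hodd : p % 2 = 1 := Nat.odd_iff.mp ((Fact.out : p.Prime).odd_of_ne_two (by omega))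
    have h2 : (p-1)/2 * 2 = p - 1 := by omega
    rw [mul_pow, inv_pow, ← pow_mul, h2]
    have hc1p : c1 ^ (p-1) ≠ 0 := pow_ne_zero _ hc1
    field_simp
    linear_combination hkey
  · rintro ⟨c, hc, hcsq⟩
    have hξ : ξ₂ = ξ₁ * c ^ 2 := by
      field_simp at hcsq
      linear_combination hcsq
    set g : Fin 5 → F := ![c, 1, c, c^2, c^(2*p)] with hgdef
    have hg0 : g 0 = c := rfl
    have hg1 : g 1 = 1 := rfl
    have hg2 : g 2 = c := rfl
    have hg3 : g 3 = c^2 := rfl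
    have hg4 : g 4 = c^(2*p) := rfl
    have hgne : ∀ i, g i ≠ 0 := by
      intro i
      fin_cases i <;>
        simp [hgdef, hc]
    set f : L →ₗ[F] L := b.constr F (fun i => g i • b i) with hfdef
    set f' : L →ₗ[F] L := b.constr F (fun i => (g i)⁻¹ • b i) with hf'def
    have hfb : ∀ i, f (b i) = g i • b i := fun i => b.constr_basis F _ i
    have hf'b : ∀ i, f' (b i) = (g i)⁻¹ • b i := fun i => b.constr_basis F _ i
    have hff' : f ∘ₗ f' = LinearMap.id := by
      apply b.ext
      intro i
      simp [hf'b, hfb, smul_smul, inv_mul_cancel₀ (hgne i)]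
    have hf'f : f' ∘ₗ f = LinearMap.id := by
      apply b.ext
      intro i
      simp [hf'b, hfb, smul_smul, mul_inv_cancel₀ (hgne i)]
    set E : L ≃ₗ[F] L := LinearEquiv.ofLinear f f' hff' hf'f with hEdef
    have hrf : ∀ (x : L) (i : Fin 5), b.repr (f x) i = g i * b.repr x i := by
      intro x i
      conv_lhs => rw [← b.sum_repr x]
      rw [map_sum, Finset.sum_congr rfl
        (fun j _ => by rw [map_smul, hfb, smul_smul] :
          ∀ j ∈ Finset.univ, f (b.repr x j • b j) = (b.repr x j * g j) • b j)]
      rw [congrFun (b.repr_sum_self fun j => b.repr x j * g j) i, mul_comm]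
    have hmaplie : ∀ x y : L, f ⁅x, y⁆ = ⁅f x, f y⁆ := by
      intro x y
      rw [hbr x y, hbr (f x) (f y), map_add, map_smul, map_smul, hfb, hfb,
        hrf, hrf, hrf, hrf, hrf, hrf, hg0, hg1, hg2, hg3]
      match_scalars <;> ring
    refine ⟨{ toLinearMap := (E : L →ₗ[F] L),
              map_lie' := fun {x y} => hmaplie x y,
              invFun := E.symm, left_inv := E.left_inv, right_inv := E.right_inv }, ?_⟩
    intro x
    show f (P₁.pmap x) = P₂.pmap (f x)
    rw [key P₁ x, key P₂ (f x), h₁0, h₁1, h₁2, h₁3, h₁4, h₂0, h₂1, h₂2, h₂3, h₂4]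
    rw [map_add, map_add, map_add, map_add, map_smul, map_smul, map_smul, map_smul,
      map_smul, map_smul, hfb, hfb, hrf, hrf, hrf, hrf, hrf, hg0, hg1, hg2, hg3, hg4,
      hξ]
    simp only [smul_zero, map_zero, smul_zero, add_zero, zero_add]
    match_scalars <;> ring
end

section
/- Let F be a field of characteristic p ≥ 5 and let K₁ = ⟨x₁,...,x₅ | [x₁,x₂]=x₄, [x₁,x₃]=x₅, x₁^{[p]}=x₅⟩ and K₂ = ⟨x₁,...,x₅ | [x₁,x₂]=x₄, [x₁,x₃]=x₅, x₂^{[p]}=x₅⟩, with all unlisted basis p-powers zero. Then K₁ and K₂ are not isomorphic as restricted Lie algebras. -/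
/-- Let `F` have characteristic `p ≥ 5` and let `L = L_{5,8}` be the 5-dimensional
Lie algebra with basis `x₁,…,x₅` and nonzero brackets `[x₁,x₂] = x₄`,
`[x₁,x₃] = x₅`.  The restricted structures `K₁ : x₁^{[p]} = x₅` and
`K₂ : x₂^{[p]} = x₅` (other basis `p`-powers zero) are not isomorphic as
restricted Lie algebras. -/
theorem stmt_16 (p : ℕ) [Fact p.Prime] (hp5 : 5 ≤ p)
    {F : Type*} [Field F] [CharP F p]
    {L : Type*} [LieRing L] [LieAlgebra F L]
    (b : Module.Basis (Fin 5) F L)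
    (h14 : ⁅b 0, b 1⁆ = b 3) (h15 : ⁅b 0, b 2⁆ = b 4)
    (hz : ∀ i j : Fin 5,
      ¬(i = 0 ∧ j = 1) → ¬(i = 1 ∧ j = 0) →
      ¬(i = 0 ∧ j = 2) → ¬(i = 2 ∧ j = 0) → ⁅b i, b j⁆ = 0)
    (P₁ P₂ : RestrictedStructure p F L)
    (h₁0 : P₁.pmap (b 0) = b 4) (h₁1 : P₁.pmap (b 1) = 0) (h₁2 : P₁.pmap (b 2) = 0)
    (h₁3 : P₁.pmap (b 3) = 0) (h₁4 : P₁.pmap (b 4) = 0)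
    (h₂0 : P₂.pmap (b 0) = 0) (h₂1 : P₂.pmap (b 1) = b 4) (h₂2 : P₂.pmap (b 2) = 0)
    (h₂3 : P₂.pmap (b 3) = 0) (h₂4 : P₂.pmap (b 4) = 0) :
    ¬ ∃ e : L ≃ₗ⁅F⁆ L, ∀ x : L, e (P₁.pmap x) = P₂.pmap (e x) := by
  rintro ⟨e, he⟩
  have hp : p ≠ 0 := (Fact.out : p.Prime).ne_zero
  have h10 : ⁅b 1, b 0⁆ = -b 3 := by rw [← lie_skew, h14]
  have h20 : ⁅b 2, b 0⁆ = -b 4 := by rw [← lie_skew, h15]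
  -- general bracket formula
  have hbr : ∀ u v : L, ⁅u, v⁆ =
      (b.repr u 0 * b.repr v 1 - b.repr u 1 * b.repr v 0) • b 3 +
      (b.repr u 0 * b.repr v 2 - b.repr u 2 * b.repr v 0) • b 4 := by
    intro u v
    conv_lhs => rw [← b.sum_repr u, ← b.sum_repr v]
    rw [Fin.sum_univ_five, Fin.sum_univ_five]
    simp only [add_lie, lie_add, smul_lie, lie_smul]
    simp only [h14, h15, h10, h20,
      hz 0 0 (by decide) (by decide) (by decide) (by decide),
      hz 0 3 (by decide) (by decide) (by decide) (by decide),
      hz 0 4 (by decide) (by decide) (by decide) (by decide),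
      hz 1 1 (by decide) (by decide) (by decide) (by decide),
      hz 1 2 (by decide) (by decide) (by decide) (by decide),
      hz 1 3 (by decide) (by decide) (by decide) (by decide),
      hz 1 4 (by decide) (by decide) (by decide) (by decide),
      hz 2 1 (by decide) (by decide) (by decide) (by decide),
      hz 2 2 (by decide) (by decide) (by decide) (by decide),
      hz 2 3 (by decide) (by decide) (by decide) (by decide),
      hz 2 4 (by decide) (by decide) (by decide) (by decide),
      hz 3 0 (by decide) (by decide) (by decide) (by decide),
      hz 3 1 (by decide) (by decide) (by decide) (by decide),
      hz 3 2 (by decide) (by decide) (by decide) (by decide),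
      hz 3 3 (by decide) (by decide) (by decide) (by decide),
      hz 3 4 (by decide) (by decide) (by decide) (by decide),
      hz 4 0 (by decide) (by decide) (by decide) (by decide),
      hz 4 1 (by decide) (by decide) (by decide) (by decide),
      hz 4 2 (by decide) (by decide) (by decide) (by decide),
      hz 4 3 (by decide) (by decide) (by decide) (by decide),
      hz 4 4 (by decide) (by decide) (by decide) (by decide),
      smul_zero, add_zero, zero_add, smul_neg]
    module
  -- central elements
  have h3z : ∀ z : L, ⁅b 3, z⁆ = 0 := by
    intro z
    conv_lhs => rw [← b.sum_repr z]
    rw [Fin.sum_univ_five]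
    simp only [lie_add, lie_smul,
      hz 3 0 (by decide) (by decide) (by decide) (by decide),
      hz 3 1 (by decide) (by decide) (by decide) (by decide),
      hz 3 2 (by decide) (by decide) (by decide) (by decide),
      hz 3 3 (by decide) (by decide) (by decide) (by decide),
      hz 3 4 (by decide) (by decide) (by decide) (by decide),
      smul_zero, add_zero]
  have h4z : ∀ z : L, ⁅b 4, z⁆ = 0 := by
    intro z
    conv_lhs => rw [← b.sum_repr z]
    rw [Fin.sum_univ_five]
    simp only [lie_add, lie_smul,
      hz 4 0 (by decide) (by decide) (by decide) (by decide),
      hz 4 1 (by decide) (by decide) (by decide) (by decide),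
      hz 4 2 (by decide) (by decide) (by decide) (by decide),
      hz 4 3 (by decide) (by decide) (by decide) (by decide),
      hz 4 4 (by decide) (by decide) (by decide) (by decide),
      smul_zero, add_zero]
  have htrip : ∀ x y z : L, ⁅⁅x, y⁆, z⁆ = 0 := by
    intro x y z
    rw [hbr x y, add_lie, smul_lie, smul_lie, h3z, h4z, smul_zero, smul_zero, add_zero]
  have fold0 : ∀ l : List L, List.foldl (fun a c => ⁅a, c⁆) 0 l = 0 := by
    intro l
    induction l with
    | nil => rfl
    | cons hd tl ih => simpa [zero_lie] using ih
  -- pmap is additive (all Jacobson correction terms vanish)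
  have hadd : ∀ (P : RestrictedStructure p F L) (x y : L),
      P.pmap (x + y) = P.pmap x + P.pmap y := by
    intro P x y
    rw [P.pmap_add, Finset.sum_eq_zero, add_zero]
    intro f _
    cases hL : (List.ofFn fun i : Fin (p - 2) => if f i then x else y) with
    | nil =>
      have := congrArg List.length hL
      simp only [List.length_ofFn, List.length_nil] at this
      omega
    | cons c l' =>
      simp only [List.foldl_cons]
      rw [htrip x y c, fold0, smul_zero]
  have key : ∀ (P : RestrictedStructure p F L) (y : L),
      P.pmap y = (b.repr y 0) ^ p • P.pmap (b 0) + (b.repr y 1) ^ p • P.pmap (b 1) +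
        (b.repr y 2) ^ p • P.pmap (b 2) + (b.repr y 3) ^ p • P.pmap (b 3) +
        (b.repr y 4) ^ p • P.pmap (b 4) := by
    intro P y
    conv_lhs => rw [← b.sum_repr y, Fin.sum_univ_five]
    rw [hadd, hadd, hadd, hadd, P.pmap_smul, P.pmap_smul, P.pmap_smul, P.pmap_smul, P.pmap_smul]
  have hP2 : ∀ y : L, P₂.pmap y = (b.repr y 1) ^ p • b 4 := by
    intro y
    rw [key P₂ y, h₂0, h₂1, h₂2, h₂3, h₂4]
    simp
  have einj : Function.Injective e := e.injective
  have emap0 : e (0 : L) = 0 := map_zero e.toLinearEquiv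
  have emapsmul : ∀ (t : F) (x : L), e (t • x) = t • e x := fun t x =>
    map_smul e.toLinearEquiv t x
  have emaplie : ∀ x y : L, e ⁅x, y⁆ = ⁅e x, e y⁆ := fun x y => LieHom.map_lie e.toLieHom x y
  have coord : ∀ α β γ : F, α • b 3 + β • b 4 = γ • b 4 → α = 0 ∧ β = γ := by
    intro α β γ h
    constructor
    · have h' := congrArg (fun w => b.repr w 3) h
      simpa [Module.Basis.repr_self, Finsupp.single_apply] using h'
    · have h' := congrArg (fun w => b.repr w 4) h
      simpa [Module.Basis.repr_self, Finsupp.single_apply] using h'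
  set a0 := b.repr (e (b 0)) 0 with ha0d
  set a1 := b.repr (e (b 0)) 1 with ha1d
  set a2 := b.repr (e (b 0)) 2 with ha2d
  set c0 := b.repr (e (b 1)) 0 with hc0d
  set c1 := b.repr (e (b 1)) 1 with hc1d
  set c2 := b.repr (e (b 1)) 2 with hc2d
  set d0 := b.repr (e (b 2)) 0 with hd0d
  set d1 := b.repr (e (b 2)) 1 with hd1d
  set d2 := b.repr (e (b 2)) 2 with hd2d
  have E0 : e (b 4) = a1 ^ p • b 4 := by
    have h := he (b 0)
    rw [h₁0, hP2] at h
    exact h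
  have E1 : c1 = 0 := by
    have h := he (b 1)
    rw [h₁1, emap0, hP2] at h
    rcases smul_eq_zero.mp h.symm with h' | h'
    · exact (pow_eq_zero_iff hp).mp h'
    · exact absurd h' (b.ne_zero 4)
  have E2 : d1 = 0 := by
    have h := he (b 2)
    rw [h₁2, emap0, hP2] at h
    rcases smul_eq_zero.mp h.symm with h' | h'
    · exact (pow_eq_zero_iff hp).mp h'
    · exact absurd h' (b.ne_zero 4)
  have B3 : e (b 3) = (a0 * c1 - a1 * c0) • b 3 + (a0 * c2 - a2 * c0) • b 4 := by
    conv_rhs => rw [ha0d, ha1d, ha2d, hc0d, hc1d, hc2d, ← hbr, ← emaplie, h14]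
  have B4eq : (a0 * d1 - a1 * d0) • b 3 + (a0 * d2 - a2 * d0) • b 4 = a1 ^ p • b 4 := by
    conv_lhs => rw [ha0d, ha1d, ha2d, hd0d, hd1d, hd2d, ← hbr, ← emaplie, h15]
    exact E0
  have B12 : (c0 * d1 - c1 * d0) • b 3 + (c0 * d2 - c2 * d0) • b 4 = (0 : F) • b 4 := by
    conv_lhs => rw [hc0d, hc1d, hc2d, hd0d, hd1d, hd2d, ← hbr, ← emaplie,
      hz 1 2 (by decide) (by decide) (by decide) (by decide), emap0]
    rw [zero_smul]
  obtain ⟨eq3, eq4⟩ := coord _ _ _ B4eq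
  obtain ⟨-, eq12⟩ := coord _ _ _ B12
  rw [E2, mul_zero, zero_sub, neg_eq_zero] at eq3
  -- eq3 : a1 * d0 = 0,  eq4 : a0 * d2 - a2 * d0 = a1 ^ p,  eq12 : c0 * d2 - c2 * d0 = 0
  by_cases ha1 : a1 = 0
  · have h40 : e (b 4) = 0 := by rw [E0, ha1, zero_pow hp, zero_smul]
    exact b.ne_zero 4 (einj (by rw [h40, emap0]))
  · have hd0 : d0 = 0 := (mul_eq_zero.mp eq3).resolve_left ha1
    rw [hd0, mul_zero, sub_zero] at eq4 eq12
    -- eq4 : a0 * d2 = a1 ^ p,  eq12 : c0 * d2 = 0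
    have hd2 : d2 ≠ 0 := by
      intro h
      exact ha1 ((pow_eq_zero_iff hp).mp (by rw [← eq4, h, mul_zero]))
    have hc0 : c0 = 0 := (mul_eq_zero.mp eq12).resolve_right hd2
    have E3 : e (b 3) = (a0 * c2) • b 4 := by
      rw [B3, E1, hc0]
      simp
    have hfin : a1 ^ p • b 3 = (a0 * c2) • b 4 := by
      apply einj
      rw [emapsmul, emapsmul, E3, E0, smul_smul, smul_smul, mul_comm]
    have hzero : a1 ^ p = (0 : F) := by
      have h' := congrArg (fun w => b.repr w 3) hfin
      simpa [Module.Basis.repr_self, Finsupp.single_apply] using h'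
    exact ha1 ((pow_eq_zero_iff hp).mp hzero)
end
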